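/- The fusion matrices realize the fusion rules under matrix multiplication: for all i, j in {0,…,m}, M_i · M_j = Σ_{k=0}^m N_{ij}^k · M_k. -/
import Mathlib


open Matrix

/-- The fusion matrices realize the fusion rules under matrix multiplication:
`M i * M j = ∑ k, N i j k • M k`. -/
theorem fusion_matrices_realize_fusion (m : ℕ) (S : Matrix (Fin (m+1)) (Fin (m+1)) ℂ)
    (hU : S * Sᴴ = 1) (hsym : Sᵀ = S) (h0 : ∀ l, S 0 l ≠ 0)
    (N : Fin (m+1) → Fin (m+1) → Fin (m+1) → ℂ)
    (hN : ∀ i j k, N i j k = ∑ l, S i l * S j l * (starRingEnd ℂ) (S l k) / S 0 l)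
    (M : Fin (m+1) → Matrix (Fin (m+1)) (Fin (m+1)) ℂ)
    (hM : ∀ i j k, M i j k = N i j k) :
    ∀ i j, M i * M j = ∑ k, N i j k • M k := by
  have hs : ∀ a b, S a b = S b a := fun a b => congrFun (congrFun hsym b) a
  have hUS : Sᴴ * S = 1 := mul_eq_one_comm.mp hU
  set D : Fin (m+1) → Matrix (Fin (m+1)) (Fin (m+1)) ℂ :=
    fun i => Matrix.diagonal (fun l => S i l / S 0 l) with hD
  have key : ∀ p l, (∑ k, (starRingEnd ℂ) (S p k) * S k l) = if p = l then 1 else 0 := by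
    intro p l
    have h := congrFun (congrFun hUS p) l
    simp only [Matrix.mul_apply, Matrix.conjTranspose_apply, Matrix.one_apply] at h
    rw [← h]
    exact Finset.sum_congr rfl fun k _ => by rw [hs p k, starRingEnd_apply]
  have hM' : ∀ i, M i = S * D i * Sᴴ := by
    intro i
    ext a b
    rw [hM, hN, Matrix.mul_apply]
    simp only [hD, Matrix.mul_diagonal, Matrix.conjTranspose_apply, ← starRingEnd_apply]
    refine Finset.sum_congr rfl fun c _ => ?_
    rw [hs c b]
    ring
  have hC : ∀ i j, D i * D j = ∑ k, N i j k • D k := by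
    intro i j
    ext a b
    simp only [hD, Matrix.diagonal_mul_diagonal, Matrix.sum_apply, Matrix.smul_apply,
      Matrix.diagonal_apply, smul_eq_mul, mul_ite, mul_zero]
    rw [Finset.sum_ite_irrel]
    by_cases hab : a = b
    · simp only [hab, if_pos rfl, if_true]
      symm
      have step : ∀ k, N i j k * (S k b / S 0 b)
          = ∑ p, (S i p * S j p / S 0 p / S 0 b) * ((starRingEnd ℂ) (S p k) * S k b) := by
        intro k
        rw [hN, Finset.sum_mul]
        exact Finset.sum_congr rfl fun p _ => by ring
      calc (∑ k, N i j k * (S k b / S 0 b))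
          = ∑ k, ∑ p, (S i p * S j p / S 0 p / S 0 b) * ((starRingEnd ℂ) (S p k) * S k b) :=
            Finset.sum_congr rfl fun k _ => step k
        _ = ∑ p, (S i p * S j p / S 0 p / S 0 b) * ∑ k, (starRingEnd ℂ) (S p k) * S k b := by
            rw [Finset.sum_comm]
            exact Finset.sum_congr rfl fun p _ => (Finset.mul_sum _ _ _).symm
        _ = ∑ p, (S i p * S j p / S 0 p / S 0 b) * if p = b then 1 else 0 := by
            exact Finset.sum_congr rfl fun p _ => by rw [key]
        _ = S i b / S 0 b * (S j b / S 0 b) := by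
            simp only [mul_ite, mul_one, mul_zero, Finset.sum_ite_eq', Finset.mem_univ,
              if_true]
            ring
    · simp [hab]
  intro i j
  simp only [hM']
  have rhs : (∑ k, N i j k • (S * D k * Sᴴ)) = S * (∑ k, N i j k • D k) * Sᴴ := by
    rw [Finset.mul_sum, Finset.sum_mul]
    exact Finset.sum_congr rfl fun k _ => by
      rw [mul_smul_comm, smul_mul_assoc]
  rw [rhs, ← hC]
  calc S * D i * Sᴴ * (S * D j * Sᴴ)
      = S * D i * ((Sᴴ * S) * (D j * Sᴴ)) := by simp only [Matrix.mul_assoc]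
    _ = S * (D i * D j) * Sᴴ := by rw [hUS, Matrix.one_mul]; simp only [Matrix.mul_assoc]
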